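/- arXiv:2301.03186 — 2 statements merged into one kernel-verified Lean document; each statement's English description precedes it below -/
import Mathlib

section
/- Fix a real L > 1 and reals y, y_1 with log(1 − 1/L) < y < y_1. Let p(x) = a_1·x² + b_1·x + c_1 with a_1, b_1, c_1 the quadratic coefficients determined by L, y and y_1, and let f(x) = log(1 + L·(e^x − 1)). Then f(x) ≤ p(x) for every x with log(1 − 1/L) < x ≤ y_1. (Pointwise quadratic upper bound used in the proof of Theorem 1; p agrees with f at y_1 and at y and has the same derivative as f at y.) -/
/-!
Let `f x = log (1 + L (eˣ - 1))` and `g = p - f`, where `p` is the quadratic; then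
`g y = g y₁ = 0` and `g' y = 0`. With `u = 1 + L (eˣ - 1)` one has `f'' = -(v + v²)` for
`v = (L - 1) / u`, which is positive and decreasing, so `f'` is strictly convex and `g'` strictly
concave. By Rolle `g'` has a second zero `ξ ∈ (y, y₁)`, and strict concavity makes `g'` negative
left of `y`, positive on `(y, ξ)` and negative right of `ξ`. Hence `g ≥ g y = 0` up to `ξ` and
`g ≥ g y₁ = 0` on `[ξ, y₁]`.
-/

open Set Real

section SignOfConcave

variable {s : Set ℝ} {f : ℝ → ℝ} {p q x : ℝ}

lemma StrictConcaveOn.pos_between_zeros (hf : StrictConcaveOn ℝ s f) (hp : p ∈ s) (hq : q ∈ s)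
    (hfp : f p = 0) (hfq : f q = 0) (hpx : p < x) (hxq : x < q) : 0 < f x := by
  have h := hf.lt_on_openSegment hp hq (hpx.trans hxq).ne
    (by rw [openSegment_eq_Ioo (hpx.trans hxq)]; exact ⟨hpx, hxq⟩)
  rwa [hfp, hfq, min_self] at h

lemma StrictConcaveOn.neg_of_lt_zeros (hf : StrictConcaveOn ℝ s f) (hx : x ∈ s) (hq : q ∈ s)
    (hfp : f p = 0) (hfq : f q = 0) (hxp : x < p) (hpq : p < q) : f x < 0 := by
  have h := hf.slope_anti_adjacent hx hq hxp hpq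
  rw [hfp, hfq, sub_zero, zero_div, zero_sub, neg_div, neg_pos] at h
  exact (div_neg_iff.1 h).resolve_left (fun h' => h'.2.not_gt (sub_pos.2 hxp)) |>.1

lemma StrictConcaveOn.neg_of_gt_zeros (hf : StrictConcaveOn ℝ s f) (hp : p ∈ s) (hx : x ∈ s)
    (hfp : f p = 0) (hfq : f q = 0) (hpq : p < q) (hqx : q < x) : f x < 0 := by
  have h := hf.slope_anti_adjacent hp hx hpq hqx
  rw [hfp, hfq, sub_zero, sub_zero, zero_div] at h
  exact (div_neg_iff.1 h).resolve_left (fun h' => h'.2.not_gt (sub_pos.2 hqx)) |>.1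

end SignOfConcave

section MonotoneOfDeriv

variable {g g' : ℝ → ℝ} {u v : ℝ}

lemma le_of_hasDerivAt_nonneg (huv : u ≤ v) (hg : ∀ z ∈ Icc u v, HasDerivAt g (g' z) z)
    (hg' : ∀ z ∈ Ioo u v, 0 ≤ g' z) : g u ≤ g v := by
  refine monotoneOn_of_hasDerivWithinAt_nonneg (f' := g') (convex_Icc u v)
    (fun z hz => (hg z hz).continuousAt.continuousWithinAt) ?_ ?_
    (left_mem_Icc.2 huv) (right_mem_Icc.2 huv) huv
  all_goals rw [interior_Icc]
  · exact fun z hz => (hg z (Ioo_subset_Icc_self hz)).hasDerivWithinAt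
  · exact hg'

lemma le_of_hasDerivAt_nonpos (huv : u ≤ v) (hg : ∀ z ∈ Icc u v, HasDerivAt g (g' z) z)
    (hg' : ∀ z ∈ Ioo u v, g' z ≤ 0) : g v ≤ g u := by
  simpa using le_of_hasDerivAt_nonneg huv (fun z hz => (hg z hz).neg)
    (fun z hz => neg_nonneg.2 (hg' z hz))

end MonotoneOfDeriv

theorem nonneg_of_strictConcaveOn_deriv {s : Set ℝ} {g g' : ℝ → ℝ}
    (hg : ∀ z ∈ s, HasDerivAt g (g' z) z) (hconc : StrictConcaveOn ℝ s g')
    {y y₁ x : ℝ} (hy : y ∈ s) (hy₁ : y₁ ∈ s) (hyy₁ : y < y₁)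
    (hgy : g y = 0) (hg'y : g' y = 0) (hgy₁ : g y₁ = 0) (hx : x ∈ s) (hxy₁ : x ≤ y₁) :
    0 ≤ g x := by
  have hIcc := hconc.1.ordConnected.out
  obtain ⟨ξ, ⟨hyξ, hξy₁⟩, hg'ξ⟩ := exists_hasDerivAt_eq_zero hyy₁
    (fun z hz => (hg z (hIcc hy hy₁ hz)).continuousAt.continuousWithinAt) (hgy.trans hgy₁.symm)
    (fun z hz => hg z (hIcc hy hy₁ (Ioo_subset_Icc_self hz)))
  have hξ : ξ ∈ s := hIcc hy hy₁ ⟨hyξ.le, hξy₁.le⟩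
  rcases le_total x y with hxy | hyx
  · rw [← hgy]
    refine le_of_hasDerivAt_nonpos hxy (fun z hz => hg z (hIcc hx hy hz)) fun z hz => ?_
    exact (hconc.neg_of_lt_zeros (hIcc hx hy (Ioo_subset_Icc_self hz)) hξ hg'y hg'ξ hz.2 hyξ).le
  rcases le_total x ξ with hxξ | hξx
  · rw [← hgy]
    refine le_of_hasDerivAt_nonneg hyx (fun z hz => hg z (hIcc hy hx hz)) fun z hz => ?_
    exact (hconc.pos_between_zeros hy hξ hg'y hg'ξ hz.1 (hz.2.trans_le hxξ)).le
  · rw [← hgy₁]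
    refine le_of_hasDerivAt_nonpos hxy₁ (fun z hz => hg z (hIcc hx hy₁ hz)) fun z hz => ?_
    exact (hconc.neg_of_gt_zeros hy (hIcc hx hy₁ (Ioo_subset_Icc_self hz)) hg'y hg'ξ hyξ
      (hξx.trans_lt hz.1)).le

section LeveragedLog

variable {L x : ℝ}

lemma one_add_mul_exp_sub_one_pos (hL : 1 < L) (hx : log (1 - 1 / L) < x) :
    0 < 1 + L * (exp x - 1) := by
  have hL0 : 0 < L := by linarith
  have h : 1 - 1 / L < exp x := by
    have h1L : 0 < 1 - 1 / L := by rw [sub_pos, div_lt_one hL0]; exact hL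
    rwa [← exp_log h1L, exp_lt_exp]
  have : 1 + L * (exp x - 1) = L * (exp x - (1 - 1 / L)) := by field_simp; ring
  rw [this]
  exact mul_pos hL0 (sub_pos.2 h)

lemma hasDerivAt_one_add_mul_exp_sub_one (L x : ℝ) :
    HasDerivAt (fun x => 1 + L * (exp x - 1)) (L * exp x) x := by
  simpa using (((hasDerivAt_exp x).sub_const 1).const_mul L).const_add 1

lemma hasDerivAt_log_one_add_mul_exp_sub_one (hu : 1 + L * (exp x - 1) ≠ 0) :
    HasDerivAt (fun x => log (1 + L * (exp x - 1))) (L * exp x / (1 + L * (exp x - 1))) x :=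
  (hasDerivAt_one_add_mul_exp_sub_one L x).log hu

/-- This form comes from `L eˣ / u = 1 + (L - 1) / u` for `u = 1 + L (eˣ - 1)`. -/
lemma hasDerivAt_mul_exp_div_one_add_mul_exp_sub_one (hu : 1 + L * (exp x - 1) ≠ 0) :
    HasDerivAt (fun x => L * exp x / (1 + L * (exp x - 1)))
      (-((L - 1) / (1 + L * (exp x - 1))) - ((L - 1) / (1 + L * (exp x - 1))) ^ 2) x := by
  refine (((hasDerivAt_exp x).const_mul L).div
    (hasDerivAt_one_add_mul_exp_sub_one L x) hu).congr_deriv ?_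
  field_simp
  ring

lemma strictMonoOn_neg_div_sub_sq (hL : 1 < L) :
    StrictMonoOn
      (fun x => -((L - 1) / (1 + L * (exp x - 1))) - ((L - 1) / (1 + L * (exp x - 1))) ^ 2)
      (Ioi (log (1 - 1 / L))) := by
  intro x₁ hx₁ x₂ hx₂ h
  have hu₁ := one_add_mul_exp_sub_one_pos hL hx₁
  have hu : 1 + L * (exp x₁ - 1) < 1 + L * (exp x₂ - 1) := by
    have := exp_lt_exp.2 h
    nlinarith
  have hv : (L - 1) / (1 + L * (exp x₂ - 1)) < (L - 1) / (1 + L * (exp x₁ - 1)) :=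
    div_lt_div_of_pos_left (by linarith) hu₁ hu
  have hv₂ : 0 < (L - 1) / (1 + L * (exp x₂ - 1)) :=
    div_pos (by linarith) (one_add_mul_exp_sub_one_pos hL hx₂)
  simp only
  nlinarith

lemma strictConvexOn_mul_exp_div_one_add_mul_exp_sub_one (hL : 1 < L) :
    StrictConvexOn ℝ (Ioi (log (1 - 1 / L))) (fun x => L * exp x / (1 + L * (exp x - 1))) := by
  have hderiv := fun x (hx : x ∈ Ioi (log (1 - 1 / L))) =>
    hasDerivAt_mul_exp_div_one_add_mul_exp_sub_one (one_add_mul_exp_sub_one_pos hL hx).ne'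
  refine StrictMonoOn.strictConvexOn_of_deriv (convex_Ioi _)
    (fun x hx => (hderiv x hx).continuousAt.continuousWithinAt) ?_
  rw [interior_Ioi]
  exact (strictMonoOn_neg_div_sub_sq hL).congr fun x hx => (hderiv x hx).deriv.symm

end LeveragedLog

theorem stmt_9 (L y y1 : ℝ) (hL : 1 < L)
    (hy : Real.log (1 - 1 / L) < y) (hy1 : y < y1)
    (a b c : ℝ)
    (ha : a = (1 / (y - y1)) *
      (Real.log ((1 + L * (Real.exp y1 - 1)) / (1 + L * (Real.exp y - 1))) / (y - y1)
        + L * Real.exp y / (1 + L * (Real.exp y - 1))))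
    (hb : b = L * Real.exp y / (1 + L * (Real.exp y - 1)) - 2 * a * y)
    (hc : c = Real.log (1 + L * (Real.exp y1 - 1)) - a * y1 ^ 2 - b * y1) :
    ∀ x : ℝ, Real.log (1 - 1 / L) < x → x ≤ y1 →
      Real.log (1 + L * (Real.exp x - 1)) ≤ a * x ^ 2 + b * x + c := by
  intro x hx hxy1
  set s := Ioi (log (1 - 1 / L))
  have hu : ∀ z ∈ s, 0 < 1 + L * (exp z - 1) := fun z hz => one_add_mul_exp_sub_one_pos hL hz
  have hderiv : ∀ z ∈ s, HasDerivAt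
      (fun z => a * z ^ 2 + b * z + c - log (1 + L * (exp z - 1)))
      (2 * a * z + b - L * exp z / (1 + L * (exp z - 1))) z := fun z hz =>
    ((((hasDerivAt_pow 2 z).const_mul a).add ((hasDerivAt_id z).const_mul b)).add_const c).sub
      (hasDerivAt_log_one_add_mul_exp_sub_one (hu z hz).ne') |>.congr_deriv (by ring)
  have hconc : StrictConcaveOn ℝ s fun z => 2 * a * z + b - L * exp z / (1 + L * (exp z - 1)) :=
    ConcaveOn.sub_strictConvexOn
      ⟨convex_Ioi _, fun _ _ _ _ p q _ _ hpq => by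
        simp only [smul_eq_mul]; linear_combination b * hpq⟩
      (strictConvexOn_mul_exp_div_one_add_mul_exp_sub_one hL)
  have hy1s : y1 ∈ s := hy.trans hy1
  have ha' : a * (y - y1) ^ 2 = log (1 + L * (exp y1 - 1)) - log (1 + L * (exp y - 1))
      + L * exp y / (1 + L * (exp y - 1)) * (y - y1) := by
    rw [ha, log_div (hu y1 hy1s).ne' (hu y hy).ne']
    field_simp [sub_ne_zero.2 hy1.ne]
  have h := nonneg_of_strictConcaveOn_deriv hderiv hconc hy hy1s hy1
    (by rw [hc, hb]; linear_combination -ha') (by rw [hb]; ring) (by rw [hc]; ring) hx hxy1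
  exact sub_nonneg.1 h
end

section
/- Fix a real L with 0 < L < 1 and reals y_0, y_1 with y_0 < y_1 < log(1/L − 1), and fix any y < y_1. Let Y_1, …, Y_n be reals with y_0 ≤ Y_i ≤ y_1, set m_1 = (1/n)·Σ Y_i, m_2 = (1/n)·Σ Y_i², and s = sqrt(m_2 − m_1²). Let a_1, b_1, c_1 be the quadratic coefficients determined by L, y and y_1; then a_1 > 0, and if the radicand −m_1² + ((1 − b_1)/a_1)·m_1 − c_1/a_1 is nonnegative and s ≤ sqrt( −m_1² + ((1 − b_1)/a_1)·m_1 − c_1/a_1 ), then Σ_{i=1}^n log(1 + L·(e^{Y_i} − 1)) ≤ Σ_{i=1}^n Y_i; that is, the log-return of the L-times leveraged index (equivalently, of a portfolio rebalanced each period to hold fraction L in the benchmark and 1 − L in cash) is at most the log-return of the benchmark index. -/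
/-!
Write `f t = log (1 + L (exp t - 1))`. The quadratic `q t = a t ^ 2 + b t + c` is the one with
`q y = f y`, `q' y = f' y` and `q y₁ = f y₁`, so `a` is a second divided difference of `f`,
positive because `f` is strictly convex. Since `f''` increases on `(-∞, log (1 / L - 1)]`, `f'` is
strictly convex on `(-∞, y₁]`, and then `q - f`, which has a double zero at `y` and a zero at `y₁`,
is nonnegative there. Summing `f (Y i) ≤ q (Y i)` gives `n (a m₂ + b m₁ + c)` as an upper bound,
and the hypothesis on `s` says precisely that `a m₂ + b m₁ + c ≤ m₁`.
-/

open Set Real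

section Interpolation

variable {g g' f f' : ℝ → ℝ} {u v : ℝ}

lemma StrictConcaveOn.min_lt_of_lt_of_lt {S : Set ℝ} (hg : StrictConcaveOn ℝ S g) {x w y : ℝ}
    (hx : x ∈ S) (hy : y ∈ S) (hxw : x < w) (hwy : w < y) : min (g x) (g y) < g w :=
  hg.lt_on_openSegment hx hy (hxw.trans hwy).ne <| by
    rw [openSegment_eq_Ioo (hxw.trans hwy)]; exact ⟨hxw, hwy⟩

/-- Rolle gives a second zero `z ∈ (u, v)` of `g'`; strict concavity then makes `g'` negative on
`(-∞, u)`, positive on `(u, z)` and negative on `(z, v]`, so `g` falls to `0` at `u`, rises from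
`0` up to `z` and falls back to `0` at `v`. -/
theorem nonneg_of_strictConcaveOn_deriv_s19 (huv : u < v) (hg : ∀ t, HasDerivAt g (g' t) t)
    (hg' : StrictConcaveOn ℝ (Iic v) g') (hgu : g u = 0) (hgv : g v = 0) (hg'u : g' u = 0)
    {t : ℝ} (ht : t ≤ v) : 0 ≤ g t := by
  obtain ⟨z, ⟨huz, hzv⟩, hg'z⟩ := exists_hasDerivAt_eq_zero huv
    (fun x _ => (hg x).continuousAt.continuousWithinAt) (hgu.trans hgv.symm) fun x _ => hg x
  have hcont : ContinuousOn g univ := fun x _ => (hg x).continuousAt.continuousWithinAt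
  have hderiv (D : Set ℝ) : ∀ x ∈ interior D, HasDerivWithinAt g (g' x) (interior D) x :=
    fun x _ => (hg x).hasDerivWithinAt
  have between {x w y : ℝ} (hxw : x < w) (hwy : w < y) (hyv : y ≤ v) :
      min (g' x) (g' y) < g' w :=
    hg'.min_lt_of_lt_of_lt (hxw.trans hwy |>.le.trans hyv) hyv hxw hwy
  rcases le_or_gt t u with htu | hut
  · have hanti : AntitoneOn g (Iic u) :=
      antitoneOn_of_hasDerivWithinAt_nonpos (convex_Iic u) (hcont.mono (subset_univ _))
        (hderiv _) fun x hx => by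
          rw [interior_Iic] at hx
          have := between hx huz hzv.le
          rw [hg'u, hg'z, min_lt_iff] at this
          exact this.resolve_right (lt_irrefl 0) |>.le
    exact hgu ▸ hanti htu self_mem_Iic htu
  rcases le_or_gt t z with htz | hzt
  · have hmono : MonotoneOn g (Icc u z) :=
      monotoneOn_of_hasDerivWithinAt_nonneg (convex_Icc u z) (hcont.mono (subset_univ _))
        (hderiv _) fun x hx => by
          rw [interior_Icc] at hx
          have := between hx.1 hx.2 hzv.le
          rw [hg'u, hg'z, min_self] at this
          exact this.le
    exact hgu ▸ hmono (left_mem_Icc.2 huz.le) ⟨hut.le, htz⟩ hut.le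
  · have hanti : AntitoneOn g (Icc z v) :=
      antitoneOn_of_hasDerivWithinAt_nonpos (convex_Icc z v) (hcont.mono (subset_univ _))
        (hderiv _) fun x hx => by
          rw [interior_Icc] at hx
          have := between huz hx.1 hx.2.le
          rw [hg'u, hg'z, min_lt_iff] at this
          exact this.resolve_left (lt_irrefl 0) |>.le
    exact hgv ▸ hanti ⟨hzt.le, ht⟩ (right_mem_Icc.2 hzv.le) ht

/-- The quadratic on the right is the one osculating `f` at `u` and interpolating it at `v`. -/
theorem le_tangent_add_mul_sq_of_strictConvexOn_deriv (huv : u < v)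
    (hf : ∀ t, HasDerivAt f (f' t) t) (hf' : StrictConvexOn ℝ (Iic v) f') {t : ℝ} (ht : t ≤ v) :
    f t ≤ f u + f' u * (t - u) + (f v - f u - f' u * (v - u)) / (v - u) ^ 2 * (t - u) ^ 2 := by
  set A := (f v - f u - f' u * (v - u)) / (v - u) ^ 2 with hA
  have hvu : v - u ≠ 0 := sub_ne_zero.2 huv.ne'
  have hlin : ConcaveOn ℝ (Iic v) fun t => f' u + 2 * A * (t - u) :=
    ⟨convex_Iic v, fun x _ y _ p q _ _ hpq => le_of_eq <| by
      simp only [smul_eq_mul]; linear_combination (f' u - 2 * A * u) * hpq⟩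
  refine sub_nonneg.1 <| nonneg_of_strictConcaveOn_deriv_s19
    (g := fun t => f u + f' u * (t - u) + A * (t - u) ^ 2 - f t) huv
    (fun t => ?_) (hlin.sub_strictConvexOn hf') (by simp) ?_ (by simp) ht
  · have := (((hasDerivAt_id t).sub_const u).const_mul (f' u)).const_add (f u) |>.add
      ((((hasDerivAt_id t).sub_const u).pow 2).const_mul A) |>.sub (hf t)
    exact this.congr_deriv (by simp only [id, Pi.sub_apply]; ring)
  · simp only [hA]; field_simp; ring

lemma sub_tangent_pos_of_strictMono_deriv (hf : ∀ t, HasDerivAt f (f' t) t) (hf' : StrictMono f')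
    (huv : u < v) : 0 < f v - f u - f' u * (v - u) := by
  obtain ⟨ξ, ⟨huξ, -⟩, hξ⟩ := exists_hasDerivAt_eq_slope f f' huv
    (fun x _ => (hf x).continuousAt.continuousWithinAt) fun x _ => hf x
  rw [eq_div_iff (sub_ne_zero.2 huv.ne')] at hξ
  nlinarith [hf' huξ]

end Interpolation

section LeveragedLogReturn

variable {L : ℝ}

noncomputable def leveragedLogReturn (L t : ℝ) : ℝ := log (1 + L * (exp t - 1))

noncomputable def leveragedLogReturnDeriv (L t : ℝ) : ℝ := L * exp t / (1 + L * (exp t - 1))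

lemma one_add_mul_exp_sub_one_pos_s19 (hL0 : 0 ≤ L) (hL1 : L ≤ 1) (t : ℝ) :
    0 < 1 + L * (exp t - 1) := by
  rcases hL1.lt_or_eq with hL1 | rfl
  · nlinarith [mul_nonneg hL0 (exp_pos t).le]
  · simpa using exp_pos t

lemma hasDerivAt_leveragedLogReturn (hL0 : 0 ≤ L) (hL1 : L ≤ 1) (t : ℝ) :
    HasDerivAt (leveragedLogReturn L) (leveragedLogReturnDeriv L t) t :=
  ((((hasDerivAt_exp t).sub_const 1).const_mul L).const_add 1).log
    (one_add_mul_exp_sub_one_pos_s19 hL0 hL1 t).ne'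

lemma hasDerivAt_leveragedLogReturnDeriv (hL0 : 0 ≤ L) (hL1 : L ≤ 1) (t : ℝ) :
    HasDerivAt (leveragedLogReturnDeriv L)
      (L * (1 - L) * exp t / (1 + L * (exp t - 1)) ^ 2) t := by
  have hP := (one_add_mul_exp_sub_one_pos_s19 hL0 hL1 t).ne'
  refine ((hasDerivAt_exp t).const_mul L).div
    ((((hasDerivAt_exp t).sub_const 1).const_mul L).const_add 1) hP |>.congr_deriv ?_
  field_simp
  ring

lemma strictMono_leveragedLogReturnDeriv (hL0 : 0 < L) (hL1 : L < 1) :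
    StrictMono (leveragedLogReturnDeriv L) := by
  refine strictMono_of_hasDerivAt_pos (hasDerivAt_leveragedLogReturnDeriv hL0.le hL1.le)
    fun t => div_pos ?_ (pow_pos (one_add_mul_exp_sub_one_pos_s19 hL0.le hL1.le t) 2)
  have := exp_pos t
  have : 0 < 1 - L := by linarith
  positivity

/-- With `x = exp t` and `K = 1 - L`, the second derivative is `L K x / (K + L x) ^ 2`, and
`x' (K + L x) ^ 2 - x (K + L x') ^ 2 = (x' - x) (K ^ 2 - L ^ 2 x x')` is positive for
`x < x'` as long as `L x' < K`, i.e. `x' < 1 / L - 1`. -/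
lemma strictConvexOn_leveragedLogReturnDeriv (hL0 : 0 < L) (hL1 : L < 1) :
    StrictConvexOn ℝ (Iic (log (1 / L - 1))) (leveragedLogReturnDeriv L) := by
  refine StrictMonoOn.strictConvexOn_of_deriv (convex_Iic _) (fun t _ =>
    (hasDerivAt_leveragedLogReturnDeriv hL0.le hL1.le t).continuousAt.continuousWithinAt) ?_
  rw [interior_Iic, funext fun t => (hasDerivAt_leveragedLogReturnDeriv hL0.le hL1.le t).deriv]
  intro s _ t ht hst
  have hK : 0 < 1 - L := by linarith
  have hLt : L * exp t < 1 - L := by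
    have := exp_lt_exp.2 ht
    rw [exp_log (by rw [one_div]; linarith [one_lt_inv_iff₀.2 ⟨hL0, hL1⟩])] at this
    rw [div_sub_one hL0.ne'] at this
    exact (lt_div_iff₀' hL0).1 this
  have hst' := exp_lt_exp.2 hst
  have hs := exp_pos s
  have hPs := one_add_mul_exp_sub_one_pos_s19 hL0.le hL1.le s
  have hPt := one_add_mul_exp_sub_one_pos_s19 hL0.le hL1.le t
  have hLK := mul_pos hL0 hK
  dsimp only
  rw [mul_div_assoc, mul_div_assoc, mul_lt_mul_iff_right₀ hLK,
    div_lt_div_iff₀ (by positivity) (by positivity)]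
  nlinarith [mul_pos (sub_pos.2 hst') (by nlinarith : 0 < (1 - L) ^ 2 - L ^ 2 * exp s * exp t)]

end LeveragedLogReturn

theorem log_one_add_mul_exp_sub_one_le_quadratic {L y1 y a b c : ℝ} (hL0 : 0 < L) (hL1 : L < 1)
    (h1 : y1 < log (1 / L - 1)) (hy : y < y1)
    (ha : a = (1 / (y - y1)) *
      (log ((1 + L * (exp y1 - 1)) / (1 + L * (exp y - 1))) / (y - y1)
        + L * exp y / (1 + L * (exp y - 1))))
    (hb : b = L * exp y / (1 + L * (exp y - 1)) - 2 * a * y)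
    (hc : c = log (1 + L * (exp y1 - 1)) - a * y1 ^ 2 - b * y1) :
    0 < a ∧ ∀ t ≤ y1, log (1 + L * (exp t - 1)) ≤ a * t ^ 2 + b * t + c := by
  set f := leveragedLogReturn L
  set f' := leveragedLogReturnDeriv L
  have hf := hasDerivAt_leveragedLogReturn hL0.le hL1.le
  have hyy1 : y1 - y ≠ 0 := sub_ne_zero.2 hy.ne'
  have hA : a = (f y1 - f y - f' y * (y1 - y)) / (y1 - y) ^ 2 := by
    rw [ha, log_div (one_add_mul_exp_sub_one_pos_s19 hL0.le hL1.le y1).ne'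
      (one_add_mul_exp_sub_one_pos_s19 hL0.le hL1.le y).ne', ← neg_sub y1 y]
    simp only [f, f', leveragedLogReturn, leveragedLogReturnDeriv]
    field_simp
    ring
  refine ⟨hA ▸ div_pos (sub_tangent_pos_of_strictMono_deriv hf
    (strictMono_leveragedLogReturnDeriv hL0 hL1) hy) (by positivity), fun t ht => ?_⟩
  have hf' := (strictConvexOn_leveragedLogReturnDeriv hL0 hL1).subset
    (Iic_subset_Iic.2 h1.le) (convex_Iic _)
  have hA' : a * (y1 - y) ^ 2 = f y1 - f y - f' y * (y1 - y) := by
    rw [hA, div_mul_cancel₀ _ (pow_ne_zero 2 hyy1)]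
  calc log (1 + L * (exp t - 1)) = f t := rfl
    _ ≤ f y + f' y * (t - y) + a * (t - y) ^ 2 :=
      hA ▸ le_tangent_add_mul_sq_of_strictConvexOn_deriv hy hf hf' ht
    _ = a * t ^ 2 + b * t + c := by
      rw [hc, hb]
      simp only [f, f', leveragedLogReturn, leveragedLogReturnDeriv] at hA' ⊢
      linear_combination hA'

lemma natCast_mul_one_div_mul_sum {n : ℕ} (x : Fin n → ℝ) :
    (n : ℝ) * ((1 / n) * ∑ i, x i) = ∑ i, x i := by
  rcases eq_or_ne n 0 with rfl | hn
  · simp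
  · field_simp

lemma mul_add_mul_add_le_of_sqrt_le {a b c m1 m2 : ℝ} (ha : 0 < a)
    (hR : 0 ≤ -m1 ^ 2 + ((1 - b) / a) * m1 - c / a)
    (hs : √(m2 - m1 ^ 2) ≤ √(-m1 ^ 2 + ((1 - b) / a) * m1 - c / a)) :
    a * m2 + b * m1 + c ≤ m1 := by
  have h := mul_le_mul_of_nonneg_left ((sqrt_le_sqrt_iff hR).1 hs) ha.le
  have : a * (-m1 ^ 2 + ((1 - b) / a) * m1 - c / a) = -a * m1 ^ 2 + (1 - b) * m1 - c := by
    field_simp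
  nlinarith

theorem stmt_19_general (L y0 y1 y : ℝ) (hL0 : 0 < L) (hL1 : L < 1)
    (h1 : y1 < Real.log (1 / L - 1)) (hy : y < y1)
    (n : ℕ) (Y : Fin n → ℝ) (hY : ∀ i, y0 ≤ Y i ∧ Y i ≤ y1)
    (a b c m1 m2 s : ℝ)
    (ha : a = (1 / (y - y1)) *
      (Real.log ((1 + L * (Real.exp y1 - 1)) / (1 + L * (Real.exp y - 1))) / (y - y1)
        + L * Real.exp y / (1 + L * (Real.exp y - 1))))
    (hb : b = L * Real.exp y / (1 + L * (Real.exp y - 1)) - 2 * a * y)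
    (hc : c = Real.log (1 + L * (Real.exp y1 - 1)) - a * y1 ^ 2 - b * y1)
    (hm1 : m1 = (1 / (n : ℝ)) * ∑ i, Y i)
    (hm2 : m2 = (1 / (n : ℝ)) * ∑ i, (Y i) ^ 2)
    (hs : s = Real.sqrt (m2 - m1 ^ 2)) :
    0 < a ∧
    ((0 ≤ -m1 ^ 2 + ((1 - b) / a) * m1 - c / a ∧
        s ≤ Real.sqrt (-m1 ^ 2 + ((1 - b) / a) * m1 - c / a)) →
      ∑ i, Real.log (1 + L * (Real.exp (Y i) - 1)) ≤ ∑ i, Y i) := by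
  obtain ⟨ha_pos, hquad⟩ := log_one_add_mul_exp_sub_one_le_quadratic hL0 hL1 h1 hy ha hb hc
  refine ⟨ha_pos, fun ⟨hR, hs_le⟩ => ?_⟩
  have hmean := mul_add_mul_add_le_of_sqrt_le ha_pos hR (hs ▸ hs_le)
  calc ∑ i, log (1 + L * (exp (Y i) - 1)) ≤ ∑ i, (a * Y i ^ 2 + b * Y i + c) :=
        Finset.sum_le_sum fun i _ => hquad (Y i) (hY i).2
    _ = n * (a * m2 + b * m1 + c) := by
        rw [mul_add, mul_add, mul_left_comm, mul_left_comm (n : ℝ) b, hm1, hm2,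
          natCast_mul_one_div_mul_sum, natCast_mul_one_div_mul_sum]
        simp [Finset.sum_add_distrib, Finset.mul_sum]
    _ ≤ n * m1 := by gcongr
    _ = ∑ i, Y i := by rw [hm1, natCast_mul_one_div_mul_sum]

theorem stmt_19 (L y0 y1 y : ℝ) (hL0 : 0 < L) (hL1 : L < 1)
    (h01 : y0 < y1) (h1 : y1 < Real.log (1 / L - 1)) (hy : y < y1)
    (n : ℕ) (Y : Fin n → ℝ) (hY : ∀ i, y0 ≤ Y i ∧ Y i ≤ y1)
    (a b c m1 m2 s : ℝ)
    (ha : a = (1 / (y - y1)) *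
      (Real.log ((1 + L * (Real.exp y1 - 1)) / (1 + L * (Real.exp y - 1))) / (y - y1)
        + L * Real.exp y / (1 + L * (Real.exp y - 1))))
    (hb : b = L * Real.exp y / (1 + L * (Real.exp y - 1)) - 2 * a * y)
    (hc : c = Real.log (1 + L * (Real.exp y1 - 1)) - a * y1 ^ 2 - b * y1)
    (hm1 : m1 = (1 / (n : ℝ)) * ∑ i, Y i)
    (hm2 : m2 = (1 / (n : ℝ)) * ∑ i, (Y i) ^ 2)
    (hs : s = Real.sqrt (m2 - m1 ^ 2)) :
    0 < a ∧
    ((0 ≤ -m1 ^ 2 + ((1 - b) / a) * m1 - c / a ∧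
        s ≤ Real.sqrt (-m1 ^ 2 + ((1 - b) / a) * m1 - c / a)) →
      ∑ i, Real.log (1 + L * (Real.exp (Y i) - 1)) ≤ ∑ i, Y i) :=
  stmt_19_general L y0 y1 y hL0 hL1 h1 hy n Y hY a b c m1 m2 s ha hb hc hm1 hm2 hs
end
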